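/- Let n, m be natural numbers with n + m even. Then I_{n,m} = (−1)^{(n−m)/2}·(n+m−1)!!, where (n+m−1)!! is the double factorial with the convention (−1)!! = 1 (i.e. for n = m = 0 the value is 1), and (−1)^{(n−m)/2} is interpreted as the sign (−1)^{|n−m|/2}. -/

import Mathlib

open MeasureTheory Real

/-- Physicists' Hermite polynomials: `H 0 x = 1`, `H 1 x = 2x`,
`H (n+1) x = 2x * H n x - 2n * H (n-1) x`. -/
noncomputable def hermiteP : ℕ → ℝ → ℝ
  | 0, _ => 1
  | 1, x => 2 * x
  | n + 2, x => 2 * x * hermiteP (n + 1) x - 2 * ((n : ℝ) + 1) * hermiteP n x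

/-- `I n m = √(2/π) ∫ H_n(x) H_m(x) e^{-2x²} dx`. -/
noncomputable def I (n m : ℕ) : ℝ :=
  Real.sqrt (2 / π) * ∫ x : ℝ, hermiteP n x * hermiteP m x * Real.exp (-2 * x ^ 2)

/-!
Integration by parts against the Gaussian weight gives `∫ p' e^{-2x²} = 4 ∫ x p e^{-2x²}`.
Combined with `H_{n+1} = 2x H_n - 2n H_{n-1}` and `H_n' = 2n H_{n-1}` this yields the
recursion `I_{n+1,m} = m I_{n,m-1} - n I_{n-1,m}`. Together with `I_{0,0} = 1` and the symmetry
`I_{n,m} = I_{m,n}` it determines `I`, and the closed form (extended by `0` when `n + m` is odd)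
satisfies the same recursion: both terms on the right carry `(n+m-2)‼` with opposite signs, and
`(n+m)‼ = (n+m) (n+m-2)‼`.
-/

open Polynomial
open scoped Nat

noncomputable def physHermite : ℕ → ℝ[X]
  | 0 => 1
  | 1 => 2 * X
  | n + 2 => 2 * X * physHermite (n + 1) - 2 * ((n : ℝ[X]) + 1) * physHermite n

theorem eval_physHermite : ∀ (n : ℕ) (x : ℝ), (physHermite n).eval x = hermiteP n x
  | 0, x => by simp [physHermite, hermiteP]
  | 1, x => by simp [physHermite, hermiteP]
  | n + 2, x => by
    simp [physHermite, hermiteP, eval_physHermite (n + 1), eval_physHermite n]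

theorem physHermite_succ : ∀ n : ℕ,
    physHermite (n + 1) = 2 * X * physHermite n - 2 * (n : ℝ[X]) * physHermite (n - 1)
  | 0 => by simp [physHermite]
  | n + 1 => by simp only [physHermite]; push_cast; ring

theorem derivative_physHermite : ∀ n : ℕ,
    derivative (physHermite n) = 2 * (n : ℝ[X]) * physHermite (n - 1)
  | 0 => by simp [physHermite]
  | 1 => by simp [physHermite]
  | n + 2 => by
    have ih₁ : derivative (physHermite (n + 1)) = 2 * ((n : ℝ[X]) + 1) * physHermite n := by
      simpa using derivative_physHermite (n + 1)
    have ih₀ := derivative_physHermite n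
    simp only [physHermite, derivative_sub, derivative_mul, ih₁, ih₀, derivative_X,
      derivative_ofNat, derivative_add, derivative_natCast, derivative_one]
    push_cast
    linear_combination (2 * ((n : ℝ[X]) + 1)) * (physHermite_succ n).symm

theorem integrable_eval_mul_exp_neg_mul_sq {b : ℝ} (hb : 0 < b) (p : ℝ[X]) :
    Integrable fun x : ℝ => p.eval x * exp (-b * x ^ 2) := by
  induction p using Polynomial.induction_on' with
  | add p q hp hq => simpa only [eval_add, add_mul] using hp.fun_add hq
  | monomial k a =>
    have hk : -1 < (k : ℝ) := neg_one_lt_zero.trans_le k.cast_nonneg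
    simpa [mul_assoc, Real.rpow_natCast] using
      (integrable_rpow_mul_exp_neg_mul_sq hb hk).const_mul a

noncomputable def gaussianIntegral (b : ℝ) (hb : 0 < b) : ℝ[X] →ₗ[ℝ] ℝ where
  toFun p := ∫ x, p.eval x * exp (-b * x ^ 2)
  map_add' p q := by
    simp only [eval_add, add_mul]
    exact integral_add (integrable_eval_mul_exp_neg_mul_sq hb p)
      (integrable_eval_mul_exp_neg_mul_sq hb q)
  map_smul' a p := by
    simp only [eval_smul, smul_eq_mul, mul_assoc, integral_const_mul, RingHom.id_apply]

theorem gaussianIntegral_apply {b : ℝ} (hb : 0 < b) (p : ℝ[X]) :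
    gaussianIntegral b hb p = ∫ x, p.eval x * exp (-b * x ^ 2) := rfl

theorem gaussianIntegral_derivative {b : ℝ} (hb : 0 < b) (p : ℝ[X]) :
    gaussianIntegral b hb (derivative p) = 2 * b * gaussianIntegral b hb (X * p) := by
  have hderiv (x : ℝ) : HasDerivAt (fun y => p.eval y * exp (-b * y ^ 2))
      ((derivative p - C (2 * b) * (X * p)).eval x * exp (-b * x ^ 2)) x := by
    refine ((p.hasDerivAt x).fun_mul ((hasDerivAt_pow 2 x).const_mul (-b)).exp).congr_deriv ?_
    simp only [eval_sub, eval_mul, eval_C, eval_X, Nat.cast_ofNat, Nat.add_one_sub_one, pow_one]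
    ring
  have hzero : gaussianIntegral b hb (derivative p - C (2 * b) * (X * p)) = 0 :=
    integral_eq_zero_of_hasDerivAt_of_integrable hderiv
      (integrable_eval_mul_exp_neg_mul_sq hb _) (integrable_eval_mul_exp_neg_mul_sq hb p)
  rw [← smul_eq_C_mul, map_sub, map_smul, smul_eq_mul] at hzero
  linarith

theorem I_eq_gaussianIntegral (n m : ℕ) :
    I n m = √(2 / π) * gaussianIntegral 2 two_pos (physHermite n * physHermite m) := by
  simp only [I, gaussianIntegral_apply, eval_mul, eval_physHermite]

theorem I_comm (n m : ℕ) : I n m = I m n := by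
  simp only [I, mul_comm (hermiteP n _)]

theorem I_zero_zero : I 0 0 = 1 := by
  have hπ : (2 / π) * (π / 2) = 1 := by field_simp
  simp only [I, hermiteP, mul_one, one_mul, integral_gaussian]
  rw [← sqrt_mul (by positivity), hπ, sqrt_one]

theorem I_succ (n m : ℕ) : I (n + 1) m = m * I n (m - 1) - n * I (n - 1) m := by
  have hrec : physHermite (n + 1) * physHermite m =
      (2 : ℝ) • (X * (physHermite n * physHermite m))
        - (2 * n : ℝ) • (physHermite (n - 1) * physHermite m) := by
    simp only [physHermite_succ, smul_eq_C_mul, map_mul, map_ofNat, map_natCast]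
    ring
  have hderiv : derivative (physHermite n * physHermite m) =
      (2 * n : ℝ) • (physHermite (n - 1) * physHermite m)
        + (2 * m : ℝ) • (physHermite n * physHermite (m - 1)) := by
    simp only [derivative_mul, derivative_physHermite, smul_eq_C_mul, map_mul, map_ofNat,
      map_natCast]
    ring
  have hibp := gaussianIntegral_derivative two_pos (physHermite n * physHermite m)
  rw [hderiv, map_add, map_smul, map_smul, smul_eq_mul, smul_eq_mul] at hibp
  rw [I_eq_gaussianIntegral, hrec, map_sub, map_smul, map_smul, smul_eq_mul, smul_eq_mul,
    I_eq_gaussianIntegral, I_eq_gaussianIntegral]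
  linear_combination (-√(2 / π) / 2) * hibp

noncomputable def hermiteGram (n m : ℕ) : ℝ :=
  if Even (n + m) then ((((n : ℤ) - m) / 2).negOnePow : ℝ) * (n + m - 1)‼ else 0

theorem hermiteGram_zero_zero : hermiteGram 0 0 = 1 := by
  simp [hermiteGram]

theorem hermiteGram_comm (n m : ℕ) : hermiteGram n m = hermiteGram m n := by
  rw [hermiteGram, hermiteGram, add_comm m n]
  split_ifs with h
  · obtain ⟨c, hc⟩ : ∃ c, (n : ℤ) - m = 2 * c := by
      obtain ⟨k, hk⟩ := h; exact ⟨k - m, by omega⟩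
    rw [hc, show (m : ℤ) - n = 2 * -c by omega, Int.mul_ediv_cancel_left _ two_ne_zero,
      Int.mul_ediv_cancel_left _ two_ne_zero, Int.negOnePow_neg]
  · rfl

theorem hermiteGram_succ (n m : ℕ) :
    hermiteGram (n + 1) m = m * hermiteGram n (m - 1) - n * hermiteGram (n - 1) m := by
  let g : ℝ := if Even (n + 1 + m) then
    ((((n : ℤ) + 1 - m) / 2).negOnePow : ℝ) * (n + m - 2)‼ else 0
  have hleft : hermiteGram (n + 1) m = (n + m) * g := by
    simp only [hermiteGram, g]
    split_ifs with h
    · obtain ⟨t, ht⟩ : ∃ t, n + m = t + 1 := ⟨n + m - 1, by grind⟩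
      rw [show n + 1 + m - 1 = t + 1 by omega, show n + m - 2 = t - 1 by omega,
        Nat.doubleFactorial_add_one]
      push_cast
      rw [show (n : ℝ) + m = t + 1 by exact_mod_cast ht]
      ring
    · simp
  have hright₁ : (m : ℝ) * hermiteGram n (m - 1) = m * g := by
    rcases m with _ | j
    · simp
    simp only [hermiteGram, g, Nat.add_sub_cancel]
    have hpar : Even (n + 1 + (j + 1)) ↔ Even (n + j) := by simp only [Nat.even_iff]; omega
    simp only [hpar]
    split_ifs
    · rw [show n + (j + 1) - 2 = n + j - 1 by omega,
        show (n : ℤ) + 1 - ((j + 1 : ℕ) : ℤ) = n - j by push_cast; ring]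
    · rfl
  have hright₂ : (n : ℝ) * hermiteGram (n - 1) m = -(n * g) := by
    rcases n with _ | k
    · simp
    simp only [hermiteGram, g, Nat.add_sub_cancel]
    have hpar : Even (k + 1 + 1 + m) ↔ Even (k + m) := by simp only [Nat.even_iff]; omega
    simp only [hpar]
    split_ifs
    · rw [show k + 1 + m - 2 = k + m - 1 by omega,
        show ((k + 1 : ℕ) : ℤ) + 1 - m = ((k : ℤ) - m) + 2 * 1 by push_cast; ring,
        Int.add_mul_ediv_left _ _ two_ne_zero, Int.negOnePow_succ]
      push_cast
      ring
    · simp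
  rw [hleft, hright₁, hright₂]
  ring

theorem I_eq_hermiteGram (n m : ℕ) : I n m = hermiteGram n m := by
  induction hs : n + m using Nat.strong_induction_on generalizing n m with
  | _ s ih =>
  have hsucc (k j : ℕ) (hkj : k + 1 + j = s) : I (k + 1) j = hermiteGram (k + 1) j := by
    rw [I_succ, hermiteGram_succ, ih _ (by omega) k (j - 1) rfl, ih _ (by omega) (k - 1) j rfl]
  match n, m with
  | 0, 0 => rw [I_zero_zero, hermiteGram_zero_zero]
  | k + 1, j => exact hsucc k j hs
  | 0, j + 1 => rw [I_comm, hermiteGram_comm]; exact hsucc j 0 (by omega)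

theorem I2_even_eq (n m : ℕ) (h : Even (n + m)) :
    I n m = (-1 : ℝ) ^ (((n : ℤ) - (m : ℤ)).natAbs / 2) *
      (Nat.doubleFactorial (n + m - 1) : ℝ) := by
  have hdvd : (2 : ℤ) ∣ (n : ℤ) - m := by
    obtain ⟨k, hk⟩ := h
    exact ⟨k - m, by omega⟩
  rw [I_eq_hermiteGram, hermiteGram, if_pos h, Int.coe_negOnePow, Int.natAbs_ediv_of_dvd hdvd]
  rfl
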